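/- arXiv:1810.03016 — 3 statements merged into one kernel-verified Lean document; each statement's English description precedes it below -/
import Mathlib

section
/- If S is a countable set, J is an ideal on S, and A ⊆ P(S) is an infinite J-almost disjoint family (i.e., every member of A is J-positive and any two distinct members have intersection in J), then the ideal I generated by A ∪ J is proper, i.e., S ∉ I. -/
/-- If `S` is a countable set, `J` is an ideal on `S`, and `A ⊆ 𝒫(S)` is an infinite
`J`-almost disjoint family, then the ideal generated by `A ∪ J` is proper, i.e. `S` is
not covered by finitely many members of `A ∪ J`. -/
theorem stmt0 {S : Type*} [Countable S]
    (J : Set (Set S))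
    (hJ0 : ∅ ∈ J)
    (hJdown : ∀ X ∈ J, ∀ Y ⊆ X, Y ∈ J)
    (hJunion : ∀ X ∈ J, ∀ Y ∈ J, X ∪ Y ∈ J)
    (A : Set (Set S))
    (hAinf : A.Infinite)
    (hApos : ∀ x ∈ A, x ∉ J)
    (hAad : ∀ x ∈ A, ∀ y ∈ A, x ≠ y → x ∩ y ∈ J) :
    ¬ ∃ F : Finset (Set S), ↑F ⊆ A ∪ J ∧ Set.univ ⊆ ⋃₀ (F : Set (Set S)) := by
  rintro ⟨F, hFsub, hFcov⟩
  -- pick a ∈ A not in F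
  obtain ⟨a, haA, haF⟩ : ∃ a ∈ A, a ∉ (F : Set (Set S)) := by
    by_contra h
    push_neg at h
    exact hAinf (F.finite_toSet.subset h)
  -- a ∩ X ∈ J for every X ∈ F
  have key : ∀ X ∈ F, a ∩ X ∈ J := by
    intro X hX
    rcases hFsub hX with hXA | hXJ
    · exact hAad a haA X hXA (fun e => haF (e ▸ hX))
    · exact hJdown X hXJ _ Set.inter_subset_right
  -- finite unions stay in J
  have main : ∀ G : Finset (Set S), (∀ X ∈ G, a ∩ X ∈ J) → a ∩ ⋃₀ (G : Set (Set S)) ∈ J := by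
    intro G
    classical
    induction G using Finset.induction_on with
    | empty => intro _; simpa using hJ0
    | insert X G' hx ih =>
      intro h
      have : a ∩ ⋃₀ (insert X G' : Finset (Set S)) = (a ∩ X) ∪ (a ∩ ⋃₀ (G' : Set (Set S))) := by
        simp [Set.inter_union_distrib_left]
      rw [this]
      exact hJunion _ (h X (Finset.mem_insert_self _ _)) _
        (ih fun Y hY => h Y (Finset.mem_insert_of_mem hY))
  have haJ : a ∈ J := by
    have : a ⊆ a ∩ ⋃₀ (F : Set (Set S)) :=
      fun s hs => ⟨hs, hFcov (Set.mem_univ s)⟩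
    exact hJdown _ (main F key) _ this
  exact hApos a haA haJ
end

section
/- Let A be an infinite almost disjoint family on ω (with respect to the ideal fin of finite sets), and let I be the ideal generated by A ∪ fin. Then for any decreasing sequence (A_k)_{k∈ω} of sets in I⁺ (i.e., A_{k+1} ⊆ A_k and each A_k ∉ I), there exists A_∞ ∈ I⁺ such that A_∞ ⊆* A_k for every k (A_∞ \ A_k is finite for all k). -/
/-- Diagonalization lemma: if `A` is an infinite almost disjoint family on `ω`, `I` is
the ideal generated by `A ∪ fin`, and `(A_k)` is a `⊆`-decreasing sequence of `I`-positive
sets, then there is an `I`-positive `A_∞` with `A_∞ ⊆* A_k` for all `k`. -/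
theorem stmt6 (A : Set (Set ℕ))
    (hAinf : A.Infinite)
    (hmem : ∀ x ∈ A, x.Infinite)
    (hAad : ∀ x ∈ A, ∀ y ∈ A, x ≠ y → (x ∩ y).Finite)
    (Ak : ℕ → Set ℕ)
    (hdec : ∀ k, Ak (k + 1) ⊆ Ak k)
    (hpos : ∀ k, ¬ ∃ F : Finset (Set ℕ), ↑F ⊆ A ∧ (Ak k \ ⋃₀ (F : Set (Set ℕ))).Finite) :
    ∃ B : Set ℕ,
      (¬ ∃ F : Finset (Set ℕ), ↑F ⊆ A ∧ (B \ ⋃₀ (F : Set (Set ℕ))).Finite) ∧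
      ∀ k, (B \ Ak k).Finite := by
  classical
  have hAnti : Antitone Ak := antitone_nat_of_succ_le hdec
  -- key selection lemma
  have key : ∀ (C : ℕ → Set ℕ), (∀ n, (C n).Infinite) →
      ∃ f : ℕ → ℕ, StrictMono f ∧ ∀ n, f n ∈ C n := by
    intro C hC
    choose g hg1 hg2 using fun n (a : ℕ) => (hC n).exists_gt a
    refine ⟨fun n => Nat.rec (g 0 0) (fun n ih => g (n + 1) ih) n, ?_, ?_⟩
    · apply strictMono_nat_of_lt_succ
      intro n
      exact hg2 (n + 1) _
    · intro n
      cases n with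
      | zero => exact hg1 0 0
      | succ n => exact hg1 (n + 1) _
  set S : Set (Set ℕ) := {X | X ∈ A ∧ ∀ n, (X ∩ Ak n).Infinite} with hSdef
  by_cases hS : S.Infinite
  · -- Case 1: infinitely many members of A meet every `Ak n` infinitely
    have e := hS.natEmbedding
    set X : ℕ → Set ℕ := fun j => (e j : Set ℕ) with hXdef
    have hXinj : Function.Injective X := fun a b h => e.injective (Subtype.ext h)
    have hXS : ∀ j, X j ∈ S := fun j => (e j).2
    choose p hp1 hp2 using fun j =>
      key (fun n => X j ∩ Ak (j + n)) (fun n => (hXS j).2 (j + n))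
    refine ⟨⋃ j, Set.range (p j), ?_, ?_⟩
    · rintro ⟨F, hFA, hfin⟩
      have hfinj : {j : ℕ | X j ∈ (F : Set (Set ℕ))}.Finite :=
        Set.Finite.preimage hXinj.injOn F.finite_toSet
      obtain ⟨j, hj⟩ := hfinj.infinite_compl.nonempty
      have hjF : X j ∉ (F : Set (Set ℕ)) := hj
      have hPB : Set.range (p j) ⊆ ⋃ i, Set.range (p i) := Set.subset_iUnion (fun i => Set.range (p i)) j
      have hPfin : (Set.range (p j) \ ⋃₀ (F : Set (Set ℕ))).Finite :=
        hfin.subset (Set.diff_subset_diff_left hPB)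
      have hXF : (X j ∩ ⋃₀ (F : Set (Set ℕ))).Finite := by
        have : (⋃ Y ∈ F, X j ∩ Y).Finite := by
          apply Set.Finite.biUnion F.finite_toSet
          intro Y hY
          refine hAad _ (hXS j).1 Y (hFA hY) ?_
          rintro rfl
          exact hjF hY
        apply this.subset
        rintro m ⟨hmX, Y, hYF, hmY⟩
        exact Set.mem_biUnion hYF ⟨hmX, hmY⟩
      have hfinrange : (Set.range (p j)).Finite := by
        apply (hPfin.union hXF).subset
        rintro m ⟨n, rfl⟩
        by_cases hmem : p j n ∈ ⋃₀ (F : Set (Set ℕ))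
        · exact Or.inr ⟨(hp2 j n).1, hmem⟩
        · exact Or.inl ⟨⟨n, rfl⟩, hmem⟩
      exact Set.infinite_range_of_injective (hp1 j).injective hfinrange
    · intro k
      have hfin : (⋃ j ∈ Finset.range k, p j '' Set.Iio k).Finite :=
        Set.Finite.biUnion (Finset.range k).finite_toSet
          (fun j _ => (Set.finite_Iio k).image _)
      apply hfin.subset
      rintro m ⟨hmB, hmA⟩
      obtain ⟨j, hj⟩ := Set.mem_iUnion.1 hmB
      obtain ⟨n, rfl⟩ := hj
      have hjn : j + n < k := by
        by_contra h
        push_neg at h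
        exact hmA (hAnti h (hp2 j n).2)
      have hjk : j < k := lt_of_le_of_lt (Nat.le_add_right j n) hjn
      have hnk : n < k := lt_of_le_of_lt (Nat.le_add_left n j) hjn
      exact Set.mem_biUnion (Finset.mem_range.2 hjk) ⟨n, hnk, rfl⟩
  · -- Case 2: only finitely many members of A meet every `Ak n` infinitely
    rw [Set.not_infinite] at hS
    set F0 : Finset (Set ℕ) := hS.toFinset with hF0def
    have hF0A : (F0 : Set (Set ℕ)) ⊆ A := by
      intro Y hY
      exact (hS.mem_toFinset.1 hY).1
    set A' : ℕ → Set ℕ := fun k => Ak k \ ⋃₀ (F0 : Set (Set ℕ)) with hA'def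
    have hA'inf : ∀ k, (A' k).Infinite := fun k hfin => hpos k ⟨F0, hF0A, hfin⟩
    obtain ⟨b, hb1, hb2⟩ := key A' hA'inf
    refine ⟨Set.range b, ?_, ?_⟩
    · rintro ⟨F, hFA, hfin⟩
      have hY : ∀ Y ∈ A, (Set.range b ∩ Y).Finite := by
        intro Y hYA
        by_cases hYS : Y ∈ S
        · have hempty : Set.range b ∩ Y = ∅ := by
            ext m
            simp only [Set.mem_inter_iff, Set.mem_empty_iff_false, iff_false, not_and]
            rintro ⟨n, rfl⟩ hmY
            exact (hb2 n).2 ⟨Y, hS.mem_toFinset.2 hYS, hmY⟩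
          rw [hempty]
          exact Set.finite_empty
        · have hYn : ∃ n, (Y ∩ Ak n).Finite := by
            by_contra h
            push_neg at h
            exact hYS ⟨hYA, h⟩
          obtain ⟨n, hn⟩ := hYn
          apply (hn.union ((Set.finite_Iio n).image b)).subset
          rintro m ⟨⟨i, rfl⟩, hmY⟩
          by_cases hi : i < n
          · exact Or.inr ⟨i, hi, rfl⟩
          · push_neg at hi
            exact Or.inl ⟨hmY, hAnti hi (hb2 i).1⟩
      have hcap : (Set.range b ∩ ⋃₀ (F : Set (Set ℕ))).Finite := by
        have : (⋃ Y ∈ F, Set.range b ∩ Y).Finite :=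
          Set.Finite.biUnion F.finite_toSet (fun Y hYm => hY Y (hFA hYm))
        apply this.subset
        rintro m ⟨hmb, Y, hYF, hmY⟩
        exact Set.mem_biUnion hYF ⟨hmb, hmY⟩
      have hfinrange : (Set.range b).Finite := by
        apply (hfin.union hcap).subset
        rintro m ⟨n, rfl⟩
        by_cases hmem : b n ∈ ⋃₀ (F : Set (Set ℕ))
        · exact Or.inr ⟨⟨n, rfl⟩, hmem⟩
        · exact Or.inl ⟨⟨n, rfl⟩, hmem⟩
      exact Set.infinite_range_of_injective hb1.injective hfinrange
    · intro k
      apply ((Set.finite_Iio k).image b).subset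
      rintro m ⟨⟨i, rfl⟩, hmA⟩
      by_cases hi : i < k
      · exact ⟨i, hi, rfl⟩
      · push_neg at hi
        exact absurd ((hb2 i).1) (fun h => hmA (hAnti hi h))
end

section
/- Let A ⊆ P(ω×ω) be an infinite (fin⊗fin)-almost disjoint family and I the ideal on ω×ω generated by A ∪ (fin⊗fin). If (A_k)_{k∈ω} is a decreasing sequence of sets each lying in I^{++} (the sets in I⁺ all of whose nonempty vertical sections are infinite), then there is A_∞ ∈ I^{++} with A_∞ ⊆*_{fin⊗fin} A_k for every k (i.e., A_∞ \ A_k ∈ fin⊗fin for all k). -/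
/-- The vertical section `X(n) = {m : (n,m) ∈ X}`. -/
def sec (X : Set (ℕ × ℕ)) (n : ℕ) : Set ℕ := {m | (n, m) ∈ X}

/-- The ideal `fin ⊗ fin` on `ω × ω`. -/
def finOtimesFin : Set (Set (ℕ × ℕ)) :=
  {X | {n : ℕ | (sec X n).Infinite}.Finite}

/-- `X ∈ (fin⊗fin)^{++}`-shape: all nonempty vertical sections of `X` are infinite. -/
def AllSecInf (X : Set (ℕ × ℕ)) : Prop :=
  ∀ n, (sec X n).Nonempty → (sec X n).Infinite

lemma mem_finOtimesFin {X : Set (ℕ × ℕ)} :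
    X ∈ finOtimesFin ↔ {n | (sec X n).Infinite}.Finite := Iff.rfl

lemma exists_mono_choice (S : ℕ → Set ℕ) (h : ∀ t, (S t).Infinite) :
    ∃ ν : ℕ → ℕ, StrictMono ν ∧ ∀ t, ν t ∈ S t := by
  choose g hg hgt using fun (t b : ℕ) => (h t).exists_gt b
  refine ⟨fun t => Nat.rec (g 0 0) (fun t ih => g (t + 1) ih) t,
    strictMono_nat_of_lt_succ fun t => hgt _ _, fun t => ?_⟩
  cases t with
  | zero => exact hg 0 0
  | succ t => exact hg _ _

/-- Diagonal construction: put the `ν t`-section of `Y t` on column `ν t`. -/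
lemma build (ν : ℕ → ℕ) (hν : Function.Injective ν) (Y : ℕ → Set (ℕ × ℕ))
    (hsec : ∀ t, (sec (Y t) (ν t)).Infinite) :
    ∃ B : Set (ℕ × ℕ),
      (∀ t, sec B (ν t) = sec (Y t) (ν t)) ∧
      (∀ n, n ∉ Set.range ν → sec B n = ∅) ∧
      AllSecInf B ∧
      {n | (sec B n).Infinite}.Infinite ∧
      (∀ Z : Set (ℕ × ℕ), {t | ¬ Y t ⊆ Z}.Finite → (B \ Z) ∈ finOtimesFin) := by
  set B : Set (ℕ × ℕ) := {p | ∃ t, p.1 = ν t ∧ p ∈ Y t} with hBdef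
  have hBsec : ∀ t, sec B (ν t) = sec (Y t) (ν t) := by
    intro t
    ext m
    constructor
    · rintro ⟨t', ht', hm⟩
      rcases hν ht' with rfl
      exact hm
    · intro hm
      exact ⟨t, rfl, hm⟩
  have hBempty : ∀ n, n ∉ Set.range ν → sec B n = ∅ := by
    intro n hn
    ext m
    simp only [Set.mem_empty_iff_false, iff_false]
    rintro ⟨t, ht, -⟩
    exact hn ⟨t, ht.symm⟩
  refine ⟨B, hBsec, hBempty, ?_, ?_, ?_⟩
  · intro n hn
    by_cases hr : n ∈ Set.range ν
    · obtain ⟨t, rfl⟩ := hr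
      rw [hBsec t]
      exact hsec t
    · rw [hBempty n hr] at hn
      exact absurd hn (by simp)
  · refine (Set.infinite_range_of_injective hν).mono ?_
    rintro n ⟨t, rfl⟩
    rw [Set.mem_setOf_eq, hBsec t]
    exact hsec t
  · intro Z hZ
    rw [mem_finOtimesFin]
    refine (hZ.image ν).subset ?_
    intro n hn
    rw [Set.mem_setOf_eq] at hn
    obtain ⟨m, hm⟩ := hn.nonempty
    have h1 : (n, m) ∈ B := hm.1
    have h2 : (n, m) ∉ Z := hm.2
    obtain ⟨t, ht, hmY⟩ := h1
    exact ⟨t, fun hYZ => h2 (hYZ hmY), ht.symm⟩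

/-- Two-dimensional diagonalization: given an infinite `fin⊗fin`-almost disjoint family
`A`, the ideal `I` generated by `A ∪ fin⊗fin`, and a decreasing sequence `(A_k)` from
`I^{++}`, there is `A_∞ ∈ I^{++}` with `A_∞ \ A_k ∈ fin⊗fin` for all `k`. -/
theorem stmt9 (A : Set (Set (ℕ × ℕ)))
    (hAinf : A.Infinite)
    (hApos : ∀ x ∈ A, x ∉ finOtimesFin)
    (hAad : ∀ x ∈ A, ∀ y ∈ A, x ≠ y → x ∩ y ∈ finOtimesFin)
    (Ak : ℕ → Set (ℕ × ℕ))
    (hdec : ∀ k, Ak (k + 1) ⊆ Ak k)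
    (hpos : ∀ k, ¬ ∃ F : Finset (Set (ℕ × ℕ)),
      ↑F ⊆ A ∧ (Ak k \ ⋃₀ (F : Set (Set (ℕ × ℕ)))) ∈ finOtimesFin)
    (hpp : ∀ k, AllSecInf (Ak k)) :
    ∃ B : Set (ℕ × ℕ),
      (¬ ∃ F : Finset (Set (ℕ × ℕ)),
        ↑F ⊆ A ∧ (B \ ⋃₀ (F : Set (Set (ℕ × ℕ)))) ∈ finOtimesFin) ∧
      AllSecInf B ∧
      ∀ k, (B \ Ak k) ∈ finOtimesFin := by
  have hanti : Antitone Ak := antitone_nat_of_succ_le hdec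
  set Astar : Set (Set (ℕ × ℕ)) :=
    {x | x ∈ A ∧ ∀ k, (x ∩ Ak k) ∉ finOtimesFin} with hAstarDef
  by_cases hstar : Astar.Infinite
  · -- Case A: infinitely many members of A have positive intersection with all Ak
    set x : ℕ → Set (ℕ × ℕ) := fun i => (hstar.natEmbedding Astar i : Set (ℕ × ℕ)) with hxdef
    have hxinj : Function.Injective x :=
      fun a b hab => (hstar.natEmbedding Astar).injective (Subtype.ext hab)
    have hxstar : ∀ i, x i ∈ Astar := fun i => (hstar.natEmbedding Astar i).2
    have hxA : ∀ i, x i ∈ A := fun i => (hxstar i).1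
    set Y : ℕ → Set (ℕ × ℕ) :=
      fun t => x (Nat.unpair t).1 ∩ Ak (max (Nat.unpair t).1 (Nat.unpair t).2) with hYdef
    have hYpos : ∀ t, {n | (sec (Y t) n).Infinite}.Infinite := by
      intro t
      have := (hxstar (Nat.unpair t).1).2 (max (Nat.unpair t).1 (Nat.unpair t).2)
      exact this
    obtain ⟨ν, hνmono, hνmem⟩ := exists_mono_choice _ hYpos
    obtain ⟨B, hBsec, hBempty, hBall, hBinf, hBdiff⟩ :=
      build ν hνmono.injective Y (fun t => hνmem t)
    refine ⟨B, ?_, hBall, ?_⟩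
    · rintro ⟨F, hFA, hFsm⟩
      rw [mem_finOtimesFin] at hFsm
      have hpre : {i | x i ∈ (↑F : Set (Set (ℕ × ℕ)))}.Finite :=
        Set.Finite.preimage hxinj.injOn F.finite_toSet
      obtain ⟨i, hi⟩ := hpre.infinite_compl.nonempty
      rw [Set.mem_compl_iff, Set.mem_setOf_eq] at hi
      have hνi_inj : Function.Injective (fun j => ν (Nat.pair i j)) := by
        intro a b hab
        have h1 := hνmono.injective hab
        have h2 := congrArg (fun p => (Nat.unpair p).2) h1
        simpa [Nat.unpair_pair] using h2
      set Bad : Set ℕ :=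
        ⋃ x' ∈ (↑F : Set (Set (ℕ × ℕ))),
          {j | (sec (x' ∩ x i) (ν (Nat.pair i j))).Infinite} with hBadDef
      have hBadFin : Bad.Finite := by
        refine Set.Finite.biUnion F.finite_toSet ?_
        intro x' hx'
        have hne : x' ≠ x i := fun h => hi (h ▸ hx')
        have had := hAad x' (hFA hx') (x i) (hxA i) hne
        rw [mem_finOtimesFin] at had
        exact Set.Finite.preimage hνi_inj.injOn had
      have hsub : (fun j => ν (Nat.pair i j)) '' Badᶜ ⊆
          {n | (sec (B \ ⋃₀ (↑F : Set (Set (ℕ × ℕ)))) n).Infinite} := by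
        rintro n ⟨j, hj, rfl⟩
        have hj' : ∀ x' ∈ (↑F : Set (Set (ℕ × ℕ))),
            (sec (x' ∩ x i) (ν (Nat.pair i j))).Finite := by
          intro x' hx'
          by_contra hcc
          exact hj (Set.mem_biUnion hx' hcc)
        set t := Nat.pair i j with htdef
        have hBn : sec B (ν t) = sec (Y t) (ν t) := hBsec t
        have hinfB : (sec B (ν t)).Infinite := by
          rw [hBn]; exact hνmem t
        have hsubxi : sec B (ν t) ⊆ sec (x i) (ν t) := by
          rw [hBn]
          intro m hm
          have : (ν t, m) ∈ Y t := hm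
          rw [hYdef] at this
          simp only [htdef, Nat.unpair_pair] at this
          exact this.1
        rw [Set.mem_setOf_eq]
        have hkey : sec B (ν t) \ ⋃ x' ∈ (↑F : Set (Set (ℕ × ℕ))), sec (x' ∩ x i) (ν t)
            ⊆ sec (B \ ⋃₀ (↑F : Set (Set (ℕ × ℕ)))) (ν t) := by
          rintro m ⟨hmB, hmU⟩
          refine ⟨hmB, ?_⟩
          intro hmem
          obtain ⟨x', hx', hmx'⟩ := hmem
          exact hmU (Set.mem_biUnion hx' ⟨hmx', hsubxi hmB⟩)
        refine (hinfB.diff ?_).mono hkey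
        exact Set.Finite.biUnion F.finite_toSet (fun x' hx' => hj' x' hx')
      exact ((hBadFin.infinite_compl.image hνi_inj.injOn).mono hsub) hFsm
    · intro k
      refine hBdiff (Ak k) ?_
      have huinj : Function.Injective Nat.unpair := fun a b h => by
        rw [← Nat.pair_unpair a, ← Nat.pair_unpair b, h]
      refine (Set.Finite.preimage huinj.injOn
        ((Set.finite_Iio k).prod (Set.finite_Iio k))).subset ?_
      intro t ht
      rw [Set.mem_setOf_eq] at ht
      rw [Set.mem_preimage, Set.mem_prod, Set.mem_Iio, Set.mem_Iio]
      by_contra hcon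
      apply ht
      have hmax : k ≤ max (Nat.unpair t).1 (Nat.unpair t).2 := by
        rcases not_and_or.mp hcon with h | h
        · exact le_max_of_le_left (not_lt.mp h)
        · exact le_max_of_le_right (not_lt.mp h)
      exact fun p hp => hanti hmax hp.2
  · have hfinstar : Astar.Finite := Set.not_infinite.mp hstar
    set G : Finset (Set (ℕ × ℕ)) := hfinstar.toFinset with hGdef
    have hGA : ↑G ⊆ A := by
      intro x hx
      rw [Finset.mem_coe, hGdef, Set.Finite.mem_toFinset] at hx
      exact hx.1
    set Y : ℕ → Set (ℕ × ℕ) :=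
      fun t => Ak t \ ⋃₀ (↑G : Set (Set (ℕ × ℕ))) with hYdef
    have hYpos : ∀ t, {n | (sec (Y t) n).Infinite}.Infinite := by
      intro t hcon
      exact hpos t ⟨G, hGA, hcon⟩
    obtain ⟨ν, hνmono, hνmem⟩ := exists_mono_choice _ hYpos
    obtain ⟨B, hBsec, hBempty, hBall, hBinf, hBdiff⟩ :=
      build ν hνmono.injective Y (fun t => hνmem t)
    refine ⟨B, ?_, hBall, ?_⟩
    · rintro ⟨F, hFA, hFsm⟩
      rw [mem_finOtimesFin] at hFsm
      have hBx : ∀ x' ∈ A, {n | (sec (B ∩ x') n).Infinite}.Finite := by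
        intro x' hx'A
        by_cases hx'star : x' ∈ Astar
        · refine Set.Finite.subset Set.finite_empty ?_
          intro n hn
          obtain ⟨m, hm⟩ := hn.nonempty
          have hmB : (n, m) ∈ B := hm.1
          have hmx' : (n, m) ∈ x' := hm.2
          by_cases hr : n ∈ Set.range ν
          · obtain ⟨t, rfl⟩ := hr
            have hsecm : m ∈ sec (Y t) (ν t) := by rw [← hBsec t]; exact hmB
            have hYm : (ν t, m) ∈ Ak t \ ⋃₀ (↑G : Set (Set (ℕ × ℕ))) := hsecm
            refine absurd ?_ hYm.2
            exact ⟨x', (Set.Finite.mem_toFinset hfinstar).mpr hx'star, hmx'⟩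
          · have h0 := hBempty n hr
            have hmB' : m ∈ sec B n := hmB
            rw [h0] at hmB'
            exact absurd hmB' (Set.notMem_empty m)
        · have hex : ∃ k, (x' ∩ Ak k) ∈ finOtimesFin := by
            by_contra hcon
            push_neg at hcon
            exact hx'star ⟨hx'A, hcon⟩
          obtain ⟨k, hk⟩ := hex
          rw [mem_finOtimesFin] at hk
          refine (hk.union ((Set.finite_Iio k).image ν)).subset ?_
          intro n hn
          rw [Set.mem_setOf_eq] at hn
          by_cases hr : n ∈ Set.range ν
          · obtain ⟨t, rfl⟩ := hr
            by_cases htk : t < k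
            · exact Or.inr ⟨t, htk, rfl⟩
            · refine Or.inl ?_
              rw [Set.mem_setOf_eq]
              refine hn.mono ?_
              intro m hm
              have hmY : m ∈ sec (Y t) (ν t) := by rw [← hBsec t]; exact hm.1
              have hmY' : (ν t, m) ∈ Ak t \ ⋃₀ (↑G : Set (Set (ℕ × ℕ))) := hmY
              exact ⟨hm.2, hanti (not_lt.mp htk) hmY'.1⟩
          · exfalso
            obtain ⟨m, hm⟩ := hn.nonempty
            have hmB' : m ∈ sec B n := hm.1
            rw [hBempty n hr] at hmB'
            exact absurd hmB' (Set.notMem_empty m)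
      have hsub : {n | (sec B n).Infinite} ⊆
          {n | (sec (B \ ⋃₀ (↑F : Set (Set (ℕ × ℕ)))) n).Infinite} ∪
            ⋃ x' ∈ (↑F : Set (Set (ℕ × ℕ))), {n | (sec (B ∩ x') n).Infinite} := by
        intro n hn
        rw [Set.mem_setOf_eq] at hn
        rw [Set.mem_union]
        by_contra hcon
        push_neg at hcon
        obtain ⟨h1, h2⟩ := hcon
        have h1' : (sec (B \ ⋃₀ (↑F : Set (Set (ℕ × ℕ)))) n).Finite :=
          Set.not_infinite.mp h1
        have h2' : ∀ x' ∈ (↑F : Set (Set (ℕ × ℕ))), (sec (B ∩ x') n).Finite := by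
          intro x' hx'
          by_contra hcc
          exact h2 (Set.mem_biUnion hx' hcc)
        have hsecsub : sec B n ⊆ sec (B \ ⋃₀ (↑F : Set (Set (ℕ × ℕ)))) n ∪
            ⋃ x' ∈ (↑F : Set (Set (ℕ × ℕ))), sec (B ∩ x') n := by
          intro m hm
          by_cases hmem : (n, m) ∈ ⋃₀ (↑F : Set (Set (ℕ × ℕ)))
          · obtain ⟨x', hx', hmx'⟩ := hmem
            exact Or.inr (Set.mem_biUnion hx' ⟨hm, hmx'⟩)
          · exact Or.inl ⟨hm, hmem⟩
        exact hn ((h1'.union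
          (Set.Finite.biUnion F.finite_toSet (fun x' hx' => h2' x' hx'))).subset hsecsub)
      have hUfin : ({n | (sec (B \ ⋃₀ (↑F : Set (Set (ℕ × ℕ)))) n).Infinite} ∪
          ⋃ x' ∈ (↑F : Set (Set (ℕ × ℕ))), {n | (sec (B ∩ x') n).Infinite}).Finite :=
        hFsm.union (Set.Finite.biUnion F.finite_toSet (fun x' hx' => hBx x' (hFA hx')))
      exact (hBinf.mono hsub) hUfin
    · intro k
      refine hBdiff (Ak k) ?_
      refine (Set.finite_Iio k).subset ?_
      intro t ht
      rw [Set.mem_setOf_eq] at ht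
      rw [Set.mem_Iio]
      by_contra htk
      exact ht (fun p hp => hanti (not_lt.mp htk) hp.1)
end
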